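/- arXiv:1102.3082 — 3 statements merged into one kernel-verified Lean document; each statement's English description precedes it below -/
import Mathlib

section
/- Medium-relay case: let 0 ≤ ε_2 ≤ ε_R ≤ ε_1 ≤ 1/2 with h(ε_R) < log 2, where h is the binary entropy function, and set α = (log 2 − h(ε_1)) / (log 2 − h(ε_R)). Then 0 ≤ α ≤ 1, and the rates R12 = log 2 − h(ε_R), R21 = log 2 − h(ε_1) satisfy all four achievability constraints: R12 − R21 ≤ (1 − α)·(log 2 − h(ε_R)), R21 ≤ α·(log 2 − h(ε_R)), R21 ≤ log 2 − h(ε_1), and R12 ≤ log 2 − h(ε_2). -/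
open Real

lemma Real.binEntropy_le_binEntropy {p q : ℝ} (hp : 0 ≤ p) (hpq : p ≤ q) (hq : q ≤ 2⁻¹) :
    binEntropy p ≤ binEntropy q :=
  binEntropy_strictMonoOn.monotoneOn ⟨hp, hpq.trans hq⟩ ⟨hp.trans hpq, hq⟩ hpq

/-- Medium-relay case of the binary adder two-way relay channel. -/
theorem binary_adder_medium_relay
    (εR ε1 ε2 : ℝ) (h0 : 0 ≤ ε2) (h2R : ε2 ≤ εR) (hR1 : εR ≤ ε1) (h1 : ε1 ≤ 1 / 2)
    (hR : Real.binEntropy εR < Real.log 2)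
    (α R12 R21 : ℝ)
    (hα : α = (Real.log 2 - Real.binEntropy ε1) / (Real.log 2 - Real.binEntropy εR))
    (hR12 : R12 = Real.log 2 - Real.binEntropy εR)
    (hR21 : R21 = Real.log 2 - Real.binEntropy ε1) :
    0 ≤ α ∧ α ≤ 1 ∧
      R12 - R21 ≤ (1 - α) * (Real.log 2 - Real.binEntropy εR) ∧
      R21 ≤ α * (Real.log 2 - Real.binEntropy εR) ∧
      R21 ≤ Real.log 2 - Real.binEntropy ε1 ∧
      R12 ≤ Real.log 2 - Real.binEntropy ε2 := by
  subst hα hR12 hR21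
  rw [one_div] at h1
  have hR1' : binEntropy εR ≤ binEntropy ε1 := binEntropy_le_binEntropy (h0.trans h2R) hR1 h1
  have h2R' : binEntropy ε2 ≤ binEntropy εR := binEntropy_le_binEntropy h0 h2R (hR1.trans h1)
  have hcapR : 0 < log 2 - binEntropy εR := sub_pos.2 hR
  have hcap1 : 0 ≤ log 2 - binEntropy ε1 := sub_nonneg.2 binEntropy_le_log_two
  have hshare : (log 2 - binEntropy ε1) / (log 2 - binEntropy εR) * (log 2 - binEntropy εR)
      = log 2 - binEntropy ε1 := div_mul_cancel₀ _ hcapR.ne'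
  refine ⟨div_nonneg hcap1 hcapR.le, (div_le_one hcapR).2 (by linarith), ?_, hshare.ge, le_rfl,
    by linarith⟩
  rw [sub_mul, one_mul, hshare]
end

section
/- Weak-relay case: let 0 ≤ ε_R ≤ ε_2 ≤ ε_1 ≤ 1/2 with h(ε_2) < log 2, where h is the binary entropy function, and set α = (log 2 − h(ε_1)) / (log 2 − h(ε_2)). Then 0 ≤ α ≤ 1, and the rates R12 = log 2 − h(ε_2), R21 = log 2 − h(ε_1) satisfy all four achievability constraints: R12 − R21 ≤ (1 − α)·(log 2 − h(ε_R)), R21 ≤ α·(log 2 − h(ε_R)), R21 ≤ log 2 − h(ε_1), and R12 ≤ log 2 − h(ε_2). -/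
/-! With `C ε = log 2 - h ε`, monotonicity of `h` on `[0, 1/2]` orders the capacities as
`0 ≤ C ε₁ ≤ C ε₂ ≤ C εR`. The fraction `α = C ε₁ / C ε₂` satisfies `α · C ε₂ = C ε₁` (also when
`C ε₂ = 0`, since then `C ε₁ = 0`), so both time-sharing constraints follow from `C ε₂ ≤ C εR`. -/

open Real

section TimeSharing

variable {a b c : ℝ}

lemma div_mul_cancel_of_nonneg_of_le (ha : 0 ≤ a) (hab : a ≤ b) : a / b * b = a :=
  div_mul_cancel_of_imp fun hb => le_antisymm (hb ▸ hab) ha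

lemma sub_le_one_sub_div_mul (ha : 0 ≤ a) (hab : a ≤ b) (hbc : b ≤ c) :
    b - a ≤ (1 - a / b) * c :=
  calc b - a = (1 - a / b) * b := by rw [sub_mul, one_mul, div_mul_cancel_of_nonneg_of_le ha hab]
    _ ≤ (1 - a / b) * c :=
      mul_le_mul_of_nonneg_left hbc (sub_nonneg.2 (div_le_one_of_le₀ hab (ha.trans hab)))

lemma le_div_mul_of_le (ha : 0 ≤ a) (hab : a ≤ b) (hbc : b ≤ c) : a ≤ a / b * c :=
  calc a = a / b * b := (div_mul_cancel_of_nonneg_of_le ha hab).symm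
    _ ≤ a / b * c := mul_le_mul_of_nonneg_left hbc (div_nonneg ha (ha.trans hab))

end TimeSharing

theorem binary_adder_weak_relay_general
    (εR ε1 ε2 : ℝ) (h0 : 0 ≤ εR) (hR2 : εR ≤ ε2) (h21 : ε2 ≤ ε1) (h1 : ε1 ≤ 1 / 2)
    (α R12 R21 : ℝ)
    (hα : α = (Real.log 2 - Real.binEntropy ε1) / (Real.log 2 - Real.binEntropy ε2))
    (hR12 : R12 = Real.log 2 - Real.binEntropy ε2)
    (hR21 : R21 = Real.log 2 - Real.binEntropy ε1) :
    0 ≤ α ∧ α ≤ 1 ∧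
      R12 - R21 ≤ (1 - α) * (Real.log 2 - Real.binEntropy εR) ∧
      R21 ≤ α * (Real.log 2 - Real.binEntropy εR) ∧
      R21 ≤ Real.log 2 - Real.binEntropy ε1 ∧
      R12 ≤ Real.log 2 - Real.binEntropy ε2 := by
  subst hα hR12 hR21
  rw [one_div] at h1
  have hC1 : 0 ≤ log 2 - binEntropy ε1 := sub_nonneg.2 binEntropy_le_log_two
  have hC12 : log 2 - binEntropy ε1 ≤ log 2 - binEntropy ε2 :=
    sub_le_sub_left (binEntropy_le_binEntropy (h0.trans hR2) h21 h1) _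
  have hC2R : log 2 - binEntropy ε2 ≤ log 2 - binEntropy εR :=
    sub_le_sub_left (binEntropy_le_binEntropy h0 hR2 (h21.trans h1)) _
  exact ⟨div_nonneg hC1 (hC1.trans hC12), div_le_one_of_le₀ hC12 (hC1.trans hC12),
    sub_le_one_sub_div_mul hC1 hC12 hC2R, le_div_mul_of_le hC1 hC12 hC2R, le_rfl, le_rfl⟩

/-- Weak-relay case of the binary adder two-way relay channel. -/
theorem binary_adder_weak_relay
    (εR ε1 ε2 : ℝ) (h0 : 0 ≤ εR) (hR2 : εR ≤ ε2) (h21 : ε2 ≤ ε1) (h1 : ε1 ≤ 1 / 2)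
    (h2 : Real.binEntropy ε2 < Real.log 2)
    (α R12 R21 : ℝ)
    (hα : α = (Real.log 2 - Real.binEntropy ε1) / (Real.log 2 - Real.binEntropy ε2))
    (hR12 : R12 = Real.log 2 - Real.binEntropy ε2)
    (hR21 : R21 = Real.log 2 - Real.binEntropy ε1) :
    0 ≤ α ∧ α ≤ 1 ∧
      R12 - R21 ≤ (1 - α) * (Real.log 2 - Real.binEntropy εR) ∧
      R21 ≤ α * (Real.log 2 - Real.binEntropy εR) ∧
      R21 ≤ Real.log 2 - Real.binEntropy ε1 ∧
      R12 ≤ Real.log 2 - Real.binEntropy ε2 :=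
  binary_adder_weak_relay_general εR ε1 ε2 h0 hR2 h21 h1 α R12 R21 hα hR12 hR21
end

section
/- Cut-set outer bound for the binary adder two-way relay channel: let X12, X21, Z_R, X_R, Z_2 be Bool-valued random variables on a probability space (Ω, μ) such that Z_R is independent of the pair (X12, X21) and Z_2 is independent of X_R, and set Y_R := X12 ⊕ X21 ⊕ Z_R and Y_2 := X_R ⊕ Z_2 (XOR). Then min( I[X12 : Y_R | X21], I[X_R : Y_2] ) ≤ min( log 2 − H[Z_R], log 2 − H[Z_2] ). -/
open MeasureTheory ProbabilityTheory Real
open scoped ENNReal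

/-- Shannon entropy (natural log) of a finite-valued random variable. -/
noncomputable def entropy {Ω S : Type*} [MeasurableSpace Ω] [MeasurableSpace S] [Fintype S]
    (X : Ω → S) (μ : Measure Ω) : ℝ :=
  ∑ s, Real.negMulLog ((μ.map X) {s}).toReal

/-- Conditional entropy H[X|Y]. -/
noncomputable def condEntropy {Ω S T : Type*} [MeasurableSpace Ω] [MeasurableSpace S] [Fintype S]
    [MeasurableSpace T] [Fintype T] (X : Ω → S) (Y : Ω → T) (μ : Measure Ω) : ℝ :=
  ∑ t, ((μ.map Y) {t}).toReal * entropy X (μ[|Y ⁻¹' {t}])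

/-- Mutual information I[X:Y]. -/
noncomputable def mutualInfo {Ω S T : Type*} [MeasurableSpace Ω] [MeasurableSpace S] [Fintype S]
    [MeasurableSpace T] [Fintype T] (X : Ω → S) (Y : Ω → T) (μ : Measure Ω) : ℝ :=
  entropy X μ + entropy Y μ - entropy (fun ω => (X ω, Y ω)) μ

/-- Conditional mutual information I[X:Y|Z]. -/
noncomputable def condMutualInfo {Ω S T U : Type*} [MeasurableSpace Ω] [MeasurableSpace S]
    [Fintype S] [MeasurableSpace T] [Fintype T] [MeasurableSpace U] [Fintype U]
    (X : Ω → S) (Y : Ω → T) (Z : Ω → U) (μ : Measure Ω) : ℝ :=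
  ∑ z, ((μ.map Z) {z}).toReal * mutualInfo X Y (μ[|Z ⁻¹' {z}])

/-- The uniform probability measure on `Bool` (mass 1/2 on each element). -/
noncomputable def uniformBool : Measure Bool := (2 : ℝ≥0∞)⁻¹ • Measure.count

/-! If the output is `f X ⊕ Z` with noise `Z` independent of the input `X`, then `(X, Y)` is a
bijective image of `(X, Z)`, so `H[X, Y] = H[X] + H[Z]`, while `H[Y] ≤ log 2`; hence
`I[X : Y] ≤ log 2 - H[Z]`. For the relay cut, conditioning on `X21 = t` keeps `Z_R` independent
of `X12` and does not change its law, so the same bound holds on every fibre and survives the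
averaging that defines `I[X12 : Y_R | X21]`. -/

section Entropy

variable {Ω S T : Type*} [MeasurableSpace Ω] [MeasurableSpace S] [Fintype S] {μ : Measure Ω}

lemma entropy_congr_ae {X Y : Ω → S} (h : X =ᵐ[μ] Y) : entropy X μ = entropy Y μ := by
  rw [entropy, entropy, Measure.map_congr h]

variable [MeasurableSingletonClass S]

lemma sum_toReal_measure_singleton (m : Measure S) [IsProbabilityMeasure m] :
    ∑ s, (m {s}).toReal = 1 := by
  have := sum_measureReal_singleton (μ := m) Finset.univ
  rwa [Finset.coe_univ, probReal_univ] at this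

lemma entropy_le_log_two [IsProbabilityMeasure μ] {X : Ω → Bool} (hX : Measurable X) :
    entropy X μ ≤ Real.log 2 := by
  have : IsProbabilityMeasure (μ.map X) := Measure.isProbabilityMeasure_map hX.aemeasurable
  have hsum := sum_toReal_measure_singleton (μ.map X)
  rw [Fintype.sum_bool] at hsum
  rw [entropy, Fintype.sum_bool, eq_sub_of_add_eq' hsum,
    ← binEntropy_eq_negMulLog_add_negMulLog_one_sub]
  exact binEntropy_le_log_two

variable [MeasurableSpace T] [Fintype T] [MeasurableSingletonClass T]

lemma entropy_comp_equiv {X : Ω → S} (hX : Measurable X) (e : S ≃ T) :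
    entropy (fun ω => e (X ω)) μ = entropy X μ := by
  have hmap : μ.map (fun ω => e (X ω)) = (μ.map X).map e :=
    (Measure.map_map (measurable_of_countable e) hX).symm
  rw [entropy, entropy, hmap, ← e.sum_comp]
  refine Finset.sum_congr rfl fun s _ => ?_
  rw [Measure.map_apply (measurable_of_countable e) (measurableSet_singleton _),
    ← Set.image_singleton, e.preimage_image]

lemma entropy_prod_of_indepFun [IsProbabilityMeasure μ] {X : Ω → S} {Z : Ω → T}
    (hX : Measurable X) (hZ : Measurable Z) (h : IndepFun X Z μ) :
    entropy (fun ω => (X ω, Z ω)) μ = entropy X μ + entropy Z μ := by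
  have : IsProbabilityMeasure (μ.map X) := Measure.isProbabilityMeasure_map hX.aemeasurable
  have : IsProbabilityMeasure (μ.map Z) := Measure.isProbabilityMeasure_map hZ.aemeasurable
  have hmap := (indepFun_iff_map_prod_eq_prod_map_map hX.aemeasurable hZ.aemeasurable).1 h
  have hpoint (a : S) (b : T) : ((μ.map fun ω => (X ω, Z ω)) {(a, b)}).toReal =
      ((μ.map X) {a}).toReal * ((μ.map Z) {b}).toReal := by
    rw [hmap, ← Set.singleton_prod_singleton, Measure.prod_prod, ENNReal.toReal_mul]
  simp only [entropy, Fintype.sum_prod_type, hpoint, negMulLog_mul, Finset.sum_add_distrib,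
    ← Finset.sum_mul, ← Finset.mul_sum, sum_toReal_measure_singleton]
  ring

end Entropy

namespace ProbabilityTheory

variable {Ω β γ : Type*} [MeasurableSpace Ω] [MeasurableSpace β] [MeasurableSpace γ]
  {μ : Measure Ω} {Y : Ω → β} {Z : Ω → γ} {S : Set β}

lemma IndepFun.cond_preimage_inter_preimage (h : IndepFun Y Z μ) (hY : Measurable Y)
    (hS : MeasurableSet S) {A : Set β} {B : Set γ} (hA : MeasurableSet A) (hB : MeasurableSet B) :
    μ[Y ⁻¹' A ∩ Z ⁻¹' B | Y ⁻¹' S] = μ[Y ⁻¹' A | Y ⁻¹' S] * μ (Z ⁻¹' B) := by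
  rw [cond_apply (hY hS), cond_apply (hY hS), ← Set.inter_assoc, ← Set.preimage_inter,
    h.measure_inter_preimage_eq_mul _ _ (hS.inter hA) hB, Set.preimage_inter, mul_assoc]

variable [IsFiniteMeasure μ]

lemma IndepFun.map_cond_preimage (h : IndepFun Y Z μ) (hY : Measurable Y) (hZ : Measurable Z)
    (hS : MeasurableSet S) (hμS : μ (Y ⁻¹' S) ≠ 0) : (μ[|Y ⁻¹' S]).map Z = μ.map Z := by
  have : IsProbabilityMeasure μ[|Y ⁻¹' S] := cond_isProbabilityMeasure hμS
  ext B hB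
  simpa [Measure.map_apply hZ hB] using
    h.cond_preimage_inter_preimage hY hS MeasurableSet.univ hB

lemma IndepFun.cond_preimage (h : IndepFun Y Z μ) (hY : Measurable Y) (hZ : Measurable Z)
    (hS : MeasurableSet S) (hμS : μ (Y ⁻¹' S) ≠ 0) : IndepFun Y Z μ[|Y ⁻¹' S] := by
  rw [indepFun_iff_measure_inter_preimage_eq_mul]
  intro A B hA hB
  rw [h.cond_preimage_inter_preimage hY hS hA hB, ← Measure.map_apply hZ hB,
    ← h.map_cond_preimage hY hZ hS hμS, Measure.map_apply hZ hB]

end ProbabilityTheory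

section Information

variable {Ω S T U : Type*} [MeasurableSpace Ω] [MeasurableSpace S] [Fintype S]
  [MeasurableSpace T] [Fintype T] [MeasurableSpace U] [Fintype U] [MeasurableSingletonClass U]
  {μ : Measure Ω}

lemma mutualInfo_congr_ae_right {X : Ω → S} {Y Y' : Ω → T} (h : Y =ᵐ[μ] Y') :
    mutualInfo X Y μ = mutualInfo X Y' μ := by
  have hpair : (fun ω => (X ω, Y ω)) =ᵐ[μ] fun ω => (X ω, Y' ω) := by
    filter_upwards [h] with ω hω
    rw [hω]
  rw [mutualInfo, mutualInfo, entropy_congr_ae h, entropy_congr_ae hpair]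

variable [IsProbabilityMeasure μ]

lemma condMutualInfo_le_of_forall_cond {X : Ω → S} {Y : Ω → T} {W : Ω → U}
    (hW : Measurable W) {c : ℝ} (h : ∀ u, μ (W ⁻¹' {u}) ≠ 0 → mutualInfo X Y μ[|W ⁻¹' {u}] ≤ c) :
    condMutualInfo X Y W μ ≤ c := by
  have : IsProbabilityMeasure (μ.map W) := Measure.isProbabilityMeasure_map hW.aemeasurable
  calc condMutualInfo X Y W μ ≤ ∑ u, ((μ.map W) {u}).toReal * c :=
        Finset.sum_le_sum fun u _ => by
          by_cases hu : μ (W ⁻¹' {u}) = 0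
          · simp [Measure.map_apply hW (measurableSet_singleton u), hu]
          · exact mul_le_mul_of_nonneg_left (h u hu) ENNReal.toReal_nonneg
    _ = c := by rw [← Finset.sum_mul, sum_toReal_measure_singleton, one_mul]

variable [MeasurableSingletonClass S]

lemma mutualInfo_xor_le {X : Ω → S} {Z : Ω → Bool} (hX : Measurable X) (hZ : Measurable Z)
    (h : IndepFun X Z μ) (f : S → Bool) :
    mutualInfo X (fun ω => Bool.xor (f (X ω)) (Z ω)) μ ≤ Real.log 2 - entropy Z μ := by
  let shear : Equiv.Perm (S × Bool) :=
    Function.Involutive.toPerm (fun p => (p.1, Bool.xor (f p.1) p.2)) fun p => by simp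
  have hjoint : entropy (fun ω => (X ω, Bool.xor (f (X ω)) (Z ω))) μ =
      entropy X μ + entropy Z μ := by
    rw [← entropy_prod_of_indepFun hX hZ h, ← entropy_comp_equiv (hX.prodMk hZ) shear]
    rfl
  have hout : entropy (fun ω => Bool.xor (f (X ω)) (Z ω)) μ ≤ Real.log 2 :=
    entropy_le_log_two ((measurable_of_countable fun p : S × Bool => Bool.xor (f p.1) p.2).comp
      (hX.prodMk hZ))
  rw [mutualInfo, hjoint]
  linarith

lemma condMutualInfo_xor_le {X : Ω → S} {W : Ω → U} {Z : Ω → Bool} (hX : Measurable X)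
    (hW : Measurable W) (hZ : Measurable Z) (h : IndepFun (fun ω => (X ω, W ω)) Z μ)
    (f : S → U → Bool) :
    condMutualInfo X (fun ω => Bool.xor (f (X ω) (W ω)) (Z ω)) W μ ≤
      Real.log 2 - entropy Z μ := by
  refine condMutualInfo_le_of_forall_cond hW fun u hu => ?_
  have hXW := hX.prodMk hW
  have hS : MeasurableSet (Set.univ ×ˢ {u} : Set (S × U)) :=
    MeasurableSet.univ.prod (measurableSet_singleton u)
  have hfiber : (fun ω => (X ω, W ω)) ⁻¹' (Set.univ ×ˢ {u}) = W ⁻¹' {u} := by ext; simp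
  rw [← hfiber] at hu ⊢
  set ν := μ[|(fun ω => (X ω, W ω)) ⁻¹' (Set.univ ×ˢ {u})]
  have : IsProbabilityMeasure ν := cond_isProbabilityMeasure hu
  have hind : IndepFun X Z ν := (h.cond_preimage hXW hZ hS hu).comp measurable_fst measurable_id
  have hnoise : entropy Z ν = entropy Z μ := by
    rw [entropy, entropy, h.map_cond_preimage hXW hZ hS hu]
  have hout : (fun ω => Bool.xor (f (X ω) (W ω)) (Z ω)) =ᵐ[ν]
      fun ω => Bool.xor (f (X ω) u) (Z ω) := by
    filter_upwards [ae_cond_mem (hXW hS)] with ω hω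
    rw [show W ω = u from hω.2]
  rw [mutualInfo_congr_ae_right hout, ← hnoise]
  exact mutualInfo_xor_le hX hZ hind (f · u)

end Information

/-- Cut-set outer bound for the binary adder two-way relay channel. -/
theorem binary_adder_cut_set_outer_bound
    {Ω : Type*} [MeasurableSpace Ω] (μ : Measure Ω) [IsProbabilityMeasure μ]
    (X12 X21 ZR XR Z2 YR Y2 : Ω → Bool)
    (hX12 : Measurable X12) (hX21 : Measurable X21) (hZR : Measurable ZR)
    (hXR : Measurable XR) (hZ2 : Measurable Z2)
    (hindepR : IndepFun (fun ω => (X12 ω, X21 ω)) ZR μ)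
    (hindep2 : IndepFun XR Z2 μ)
    (hYR : YR = fun ω => Bool.xor (Bool.xor (X12 ω) (X21 ω)) (ZR ω))
    (hY2 : Y2 = fun ω => Bool.xor (XR ω) (Z2 ω)) :
    min (condMutualInfo X12 YR X21 μ) (mutualInfo XR Y2 μ) ≤
      min (Real.log 2 - entropy ZR μ) (Real.log 2 - entropy Z2 μ) := by
  subst hYR hY2
  exact min_le_min (condMutualInfo_xor_le hX12 hX21 hZR hindepR Bool.xor)
    (mutualInfo_xor_le hXR hZ2 hindep2 id)
end
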